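/- Let g₁ := 2s(2s+t+3)/((s+1)(2s+2t+3)) and g₂ := 2t(s+2t+3)/((t+1)(2s+2t+3)) be elements of the rational function field ℂ(s,t). Then the subfield ℂ(g₁, g₂) of ℂ(s,t) is the whole field ℂ(s,t); that is, the rational map (s,t) ↦ (g₁(s,t), g₂(s,t)) is a birational isomorphism of ℂ² (equivalently of ℂℙ²). -/

import Mathlib

/-!
Write `D = 2s + 2t + 3`, so that `g₁ = pentMap s t` and, by the symmetry of the formula,
`g₂ = pentMap t s`. The factorisations
`2 - g₁ = 2(st + 2s + 2t + 3)/((s + 1)D)` and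
`3 - g₁ - g₂ = (2s + t + 3)(s + 2t + 3)/((s + 1)(t + 1)D)`
show that `pentInv u v = u(6 - 2u - v)/(2(2 - u)(3 - u - v))` inverts `(s, t) ↦ (g₁, g₂)`,
`s = pentInv g₁ g₂` and `t = pentInv g₂ g₁`, wherever none of the six factors above vanishes;
at the generic point none does, since each has a nonzero constant term. Hence `s, t ∈ ℂ(g₁, g₂)`.
-/

open MvPolynomial

/-- The field `ℂ(s,t)` of rational functions in two variables. -/
noncomputable abbrev RatFuncST : Type := FractionRing (MvPolynomial (Fin 2) ℂ)

/-- The inclusion `ℂ[s,t] → ℂ(s,t)`. -/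
noncomputable abbrev toRatFuncST : MvPolynomial (Fin 2) ℂ →+* RatFuncST :=
  algebraMap (MvPolynomial (Fin 2) ℂ) RatFuncST

/-- `g₁ = 2s(2s+t+3)/((s+1)(2s+2t+3)) ∈ ℂ(s,t)`, with `s = X 0`, `t = X 1`. -/
noncomputable def pentG1 : RatFuncST :=
  toRatFuncST (C 2 * X 0 * (C 2 * X 0 + X 1 + C 3)) /
    toRatFuncST ((X 0 + 1) * (C 2 * X 0 + C 2 * X 1 + C 3))

/-- `g₂ = 2t(s+2t+3)/((t+1)(2s+2t+3)) ∈ ℂ(s,t)`. -/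
noncomputable def pentG2 : RatFuncST :=
  toRatFuncST (C 2 * X 1 * (X 0 + C 2 * X 1 + C 3)) /
    toRatFuncST ((X 1 + 1) * (C 2 * X 0 + C 2 * X 1 + C 3))

open scoped IntermediateField

theorem IntermediateField.adjoin_range_algebraMap_X_eq_top {k σ F : Type*} [Field k] [Field F]
    [Algebra (MvPolynomial σ k) F] [IsFractionRing (MvPolynomial σ k) F] [Algebra k F]
    [IsScalarTower k (MvPolynomial σ k) F] :
    adjoin k (Set.range fun i => algebraMap (MvPolynomial σ k) F (X i)) = ⊤ := by
  rw [← IsFractionRing.algHom_fieldRange_eq_of_comp_eq_of_range_eq (f := AlgHom.id k F)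
    (g := IsScalarTower.toAlgHom k (MvPolynomial σ k) F) rfl]
  · exact AlgHom.fieldRange_eq_top.mpr Function.surjective_id
  · rw [← Algebra.map_top, ← adjoin_range_X, AlgHom.map_adjoin, ← Set.range_comp]
    rfl

theorem MvPolynomial.aeval_algebraMap_X_ne_zero {k σ F : Type*} [CommRing k] [CommRing F]
    [Algebra (MvPolynomial σ k) F] [IsFractionRing (MvPolynomial σ k) F] [Algebra k F]
    [IsScalarTower k (MvPolynomial σ k) F] {p : MvPolynomial σ k} (hp : p ≠ 0) :
    aeval (fun i => algebraMap (MvPolynomial σ k) F (X i)) p ≠ 0 := by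
  have : aeval (fun i => algebraMap (MvPolynomial σ k) F (X i)) =
      IsScalarTower.toAlgHom k (MvPolynomial σ k) F :=
    algHom_ext fun i => by simp
  rw [this]
  exact (map_ne_zero_iff _ (IsFractionRing.injective _ _)).mpr hp

section PentagonMap

variable {F : Type*} [Field F]

def pentMap (s t : F) : F := 2 * s * (2 * s + t + 3) / ((s + 1) * (2 * s + 2 * t + 3))

def pentInv (u v : F) : F := u * (6 - 2 * u - v) / (2 * (2 - u) * (3 - u - v))

theorem pentMap_mem {S : Type*} [SetLike S F] [SubfieldClass S F] {K : S} {s t : F}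
    (hs : s ∈ K) (ht : t ∈ K) : pentMap s t ∈ K := by
  have h2 : (2 : F) ∈ K := ofNat_mem K 2
  have h3 : (3 : F) ∈ K := ofNat_mem K 3
  exact div_mem (mul_mem (mul_mem h2 hs) (add_mem (add_mem (mul_mem h2 hs) ht) h3))
    (mul_mem (add_mem hs (one_mem K))
      (add_mem (add_mem (mul_mem h2 hs) (mul_mem h2 ht)) h3))

theorem pentInv_mem {S : Type*} [SetLike S F] [SubfieldClass S F] {K : S} {u v : F}
    (hu : u ∈ K) (hv : v ∈ K) : pentInv u v ∈ K := by
  have h2 : (2 : F) ∈ K := ofNat_mem K 2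
  have h3 : (3 : F) ∈ K := ofNat_mem K 3
  have h6 : (6 : F) ∈ K := ofNat_mem K 6
  exact div_mem (mul_mem hu (sub_mem (sub_mem h6 (mul_mem h2 hu)) hv))
    (mul_mem (mul_mem h2 (sub_mem h2 hu)) (sub_mem (sub_mem h3 hu) hv))

variable {s t : F}

theorem two_sub_pentMap (hs : s + 1 ≠ 0) (hD : 2 * s + 2 * t + 3 ≠ 0) :
    2 - pentMap s t = 2 * (s * t + 2 * s + 2 * t + 3) / ((s + 1) * (2 * s + 2 * t + 3)) := by
  rw [pentMap, eq_div_iff (mul_ne_zero hs hD), sub_mul, div_mul_cancel₀ _ (mul_ne_zero hs hD)]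
  ring

theorem three_sub_pentMap_sub_pentMap (hs : s + 1 ≠ 0) (ht : t + 1 ≠ 0)
    (hD : 2 * s + 2 * t + 3 ≠ 0) :
    3 - pentMap s t - pentMap t s =
      (2 * s + t + 3) * (s + 2 * t + 3) / ((s + 1) * (t + 1) * (2 * s + 2 * t + 3)) := by
  have hD' : 2 * t + 2 * s + 3 ≠ 0 := by rwa [add_comm (2 * t)]
  have hden := mul_ne_zero (mul_ne_zero hs hD) (mul_ne_zero ht hD')
  rw [pentMap, pentMap, sub_sub, div_add_div _ _ (mul_ne_zero hs hD) (mul_ne_zero ht hD'),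
    sub_div' hden, div_eq_div_iff hden (by simp [*])]
  ring

theorem pentInv_pentMap [NeZero (2 : F)] (hs : s + 1 ≠ 0) (ht : t + 1 ≠ 0)
    (hD : 2 * s + 2 * t + 3 ≠ 0) (hP : s * t + 2 * s + 2 * t + 3 ≠ 0)
    (hA : 2 * s + t + 3 ≠ 0) (hB : s + 2 * t + 3 ≠ 0) :
    pentInv (pentMap s t) (pentMap t s) = s := by
  have hInv : ∀ u v : F,
      pentInv u v = (2 - (2 - u)) * ((2 - u) + (3 - u - v) + 1) / (2 * (2 - u) * (3 - u - v)) :=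
    fun u v => by rw [pentInv]; ring
  rw [hInv, two_sub_pentMap hs hD, three_sub_pentMap_sub_pentMap hs ht hD]
  -- Named factors stay atomic; `field_simp` would otherwise renormalise them past `hD`, `hP`, ….
  set D := 2 * s + 2 * t + 3 with hD_def
  set P := s * t + 2 * s + 2 * t + 3 with hP_def
  set A := 2 * s + t + 3 with hA_def
  set B := s + 2 * t + 3 with hB_def
  field_simp
  rw [hD_def, hP_def, hA_def, hB_def]
  ring

theorem adjoin_pentMap_eq (k : Type*) [Field k] [Algebra k F] [NeZero (2 : F)]
    (hs : s + 1 ≠ 0) (ht : t + 1 ≠ 0) (hD : 2 * s + 2 * t + 3 ≠ 0)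
    (hP : s * t + 2 * s + 2 * t + 3 ≠ 0) (hA : 2 * s + t + 3 ≠ 0) (hB : s + 2 * t + 3 ≠ 0) :
    k⟮pentMap s t, pentMap t s⟯ = k⟮s, t⟯ := by
  have hs_mem : s ∈ k⟮s, t⟯ := IntermediateField.subset_adjoin k _ (by simp)
  have ht_mem : t ∈ k⟮s, t⟯ := IntermediateField.subset_adjoin k _ (by simp)
  have hg₁ : pentMap s t ∈ k⟮pentMap s t, pentMap t s⟯ :=
    IntermediateField.subset_adjoin k _ (by simp)
  have hg₂ : pentMap t s ∈ k⟮pentMap s t, pentMap t s⟯ :=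
    IntermediateField.subset_adjoin k _ (by simp)
  have hs_eq := pentInv_pentMap hs ht hD hP hA hB
  have ht_eq : pentInv (pentMap t s) (pentMap s t) = t :=
    pentInv_pentMap ht hs (by convert hD using 1; ring) (by convert hP using 1; ring)
      (by convert hB using 1; ring) (by convert hA using 1; ring)
  refine le_antisymm ?_ ?_ <;>
    simp only [IntermediateField.adjoin_le_iff, Set.pair_subset_iff, SetLike.mem_coe]
  · exact ⟨pentMap_mem hs_mem ht_mem, pentMap_mem ht_mem hs_mem⟩
  · exact ⟨by simpa only [hs_eq] using pentInv_mem hg₁ hg₂,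
      by simpa only [ht_eq] using pentInv_mem hg₂ hg₁⟩

end PentagonMap

/-- The subfield `ℂ(g₁, g₂)` of `ℂ(s,t)` generated over `ℂ` by
`g₁ = 2s(2s+t+3)/((s+1)(2s+2t+3))` and `g₂ = 2t(s+2t+3)/((t+1)(2s+2t+3))` is the whole
field `ℂ(s,t)`; that is, `(s,t) ↦ (g₁, g₂)` is a birational isomorphism of `ℂ²`. -/
theorem pentagon_tuned_map_birational :
    IntermediateField.adjoin ℂ ({pentG1, pentG2} : Set RatFuncST) = ⊤ := by
  set s := toRatFuncST (X 0)
  set t := toRatFuncST (X 1)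
  have hne (p : MvPolynomial (Fin 2) ℂ) (hp : eval 0 p ≠ 0) :
      aeval (fun i => toRatFuncST (X i)) p ≠ 0 :=
    aeval_algebraMap_X_ne_zero fun h => hp (by simp [h])
  have hs := hne (X 0 + 1) (by simp)
  have ht := hne (X 1 + 1) (by simp)
  have hD := hne (2 * X 0 + 2 * X 1 + 3) (by simp [map_ofNat])
  have hP := hne (X 0 * X 1 + 2 * X 0 + 2 * X 1 + 3) (by simp [map_ofNat])
  have hA := hne (2 * X 0 + X 1 + 3) (by simp [map_ofNat])
  have hB := hne (X 0 + 2 * X 1 + 3) (by simp [map_ofNat])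
  simp only [map_add, map_mul, map_one, map_ofNat, aeval_X] at hs ht hD hP hA hB
  have hg₁ : pentG1 = pentMap s t := by simp [pentG1, pentMap, s, t, map_ofNat]
  have hg₂ : pentG2 = pentMap t s := by
    simp only [pentG2, pentMap, s, t, map_mul, map_add, map_one, map_ofNat]
    ring
  rw [hg₁, hg₂, adjoin_pentMap_eq ℂ hs ht hD hP hA hB,
    ← IntermediateField.adjoin_range_algebraMap_X_eq_top (σ := Fin 2)]
  congr
  ext
  simp [Fin.exists_fin_two, eq_comm]
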